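/- arXiv:2604.08452 — 2 statements merged into one kernel-verified Lean document; each statement's English description precedes it below -/
import Mathlib

section
/- Fix an integer n ≥ 1. Then there exists δ > 0, depending only on n, such that for every choice of complex numbers λ_1, …, λ_n with |λ_j| = 1 and λ_j ≠ 1 for all j, there exists a positive integer k with |λ_j^k − 1| ≥ δ for every j = 1, …, n. (Equivalently: there is an open arc L of the unit circle containing 1, depending only on n, such that for any such λ_1, …, λ_n there is a positive integer k with λ_j^k ∉ L for all j.) -/
open Finset Real

noncomputable def nf (x : ℝ) : ℝ := |x - round x|

lemma nf_nonneg (x : ℝ) : 0 ≤ nf x := abs_nonneg _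

lemma nf_le_abs_sub_int (x : ℝ) (n : ℤ) : nf x ≤ |x - n| := by
  rcases eq_or_ne n (round x) with h | h
  · simp [nf, h]
  · have h1 : |x - round x| ≤ 1/2 := abs_sub_round x
    by_contra hc
    push_neg at hc
    have h2 : |x - n| < 1/2 := lt_of_lt_of_le hc h1
    have h3 : -(1/2) < x - (n:ℝ) ∧ x - (n:ℝ) < 1/2 := abs_lt.mp h2
    have : round x = n := by
      rw [round_eq]
      refine Int.floor_eq_iff.mpr ⟨by push_cast; linarith [h3.1], by push_cast; linarith [h3.2]⟩
    exact h this.symm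

lemma nf_add_int (x : ℝ) (z : ℤ) : nf (x + z) = nf x := by
  unfold nf
  rw [round_add_intCast]
  push_cast
  ring_nf

lemma nf_le_abs (x : ℝ) : nf x ≤ |x| := by simpa using nf_le_abs_sub_int x 0

lemma nf_add_le (x y : ℝ) : nf (x + y) ≤ nf x + nf y := by
  have h := nf_le_abs_sub_int (x + y) (round x + round y)
  have h2 : |x + y - ((round x : ℝ) + round y)| ≤ |x - round x| + |y - round y| := by
    have := abs_add_le (x - round x) (y - round y)
    calc |x + y - ((round x : ℝ) + round y)| = |(x - round x) + (y - round y)| := by ring_nf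
    _ ≤ _ := abs_add_le _ _
  calc nf (x + y) ≤ |x + y - ((round x + round y : ℤ) : ℝ)| := h
  _ ≤ nf x + nf y := by push_cast; exact h2

lemma nf_eq_zero_iff (x : ℝ) : nf x = 0 ↔ ∃ z : ℤ, x = z := by
  constructor
  · intro h
    exact ⟨round x, by have := abs_eq_zero.mp h; linarith⟩
  · rintro ⟨z, rfl⟩
    simp [nf]

lemma nf_lipschitz (x y : ℝ) : nf x ≤ nf y + |x - y| := by
  have h1 : nf x = nf (y + (x - y)) := by ring_nf
  rw [h1]
  have := nf_add_le y (x - y)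
  have := nf_le_abs (x - y)
  linarith

noncomputable def den (x : ℝ) : ℕ := sInf {b : ℕ | 0 < b ∧ ∃ z : ℤ, (b:ℝ) * x = z}

lemma den_spec (x : ℝ) (h : den x ≠ 0) : 0 < den x ∧ ∃ z : ℤ, ((den x : ℕ) : ℝ) * x = z := by
  have hne : {b : ℕ | 0 < b ∧ ∃ z : ℤ, (b:ℝ) * x = z}.Nonempty := by
    by_contra hc
    rw [Set.not_nonempty_iff_eq_empty] at hc
    apply h
    unfold den
    rw [hc, Nat.sInf_empty]
  exact Nat.sInf_mem hne

lemma den_ne_zero (x : ℝ) (b : ℕ) (hb : 0 < b) (z : ℤ) (hz : (b:ℝ) * x = z) : den x ≠ 0 := by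
  intro h0
  have h1 : sInf {b : ℕ | 0 < b ∧ ∃ z : ℤ, (b:ℝ) * x = z} = 0 := h0
  rw [Nat.sInf_eq_zero] at h1
  rcases h1 with h1 | h1
  · exact absurd h1.1 (lt_irrefl 0)
  · exact absurd h1 (Set.nonempty_iff_ne_empty.mp ⟨b, hb, z, hz⟩)

lemma den_dvd (x : ℝ) (b : ℕ) (hb : 0 < b) (z : ℤ) (hz : (b:ℝ) * x = z) : den x ∣ b := by
  have hne := den_ne_zero x b hb z hz
  obtain ⟨hd, z0, hz0⟩ := den_spec x hne
  set d := den x with hdef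
  rcases Nat.eq_zero_or_pos (b % d) with h0 | hpos
  · exact Nat.dvd_of_mod_eq_zero h0
  · exfalso
    have hbd : (d * (b / d) + b % d : ℕ) = b := Nat.div_add_mod b d
    have hmem : (b % d) ∈ {b : ℕ | 0 < b ∧ ∃ z : ℤ, (b:ℝ) * x = z} := by
      set u : ℕ := b / d with hu
      refine ⟨hpos, z - (u : ℤ) * z0, ?_⟩
      have hcast : ((b % d : ℕ) : ℝ) = (b : ℝ) - (d : ℝ) * (u : ℝ) := by
        have := congrArg (fun t : ℕ => (t : ℝ)) hbd
        push_cast at this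
        linarith
      rw [hcast, Int.cast_sub, Int.cast_mul, Int.cast_natCast]
      linear_combination hz - (u : ℝ) * hz0
    have h1 : d ≤ b % d := Nat.sInf_le hmem
    have h2 : b % d < d := Nat.mod_lt _ hd
    omega

lemma one_div_den_le_nf (x : ℝ) (h : den x ≠ 0) (h0 : nf x ≠ 0) : 1 / (den x : ℝ) ≤ nf x := by
  obtain ⟨hd, z, hz⟩ := den_spec x h
  set d := den x with hdef
  have hdpos : (0:ℝ) < d := by exact_mod_cast hd
  have key : (d:ℝ) * nf x = |((z - d * round x : ℤ) : ℝ)| := by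
    unfold nf
    rw [← abs_of_pos hdpos, ← abs_mul]
    congr 1
    push_cast
    linear_combination hz
  have hne : (z - d * round x : ℤ) ≠ 0 := by
    intro hzz
    apply h0
    have : (d:ℝ) * nf x = 0 := by rw [key, hzz]; simp
    rcases mul_eq_zero.mp this with h | h
    · exact absurd h (ne_of_gt hdpos)
    · exact h
  have h1 : (1:ℝ) ≤ |((z - d * round x : ℤ) : ℝ)| := by
    rw [← Int.cast_abs]
    exact_mod_cast Int.one_le_abs hne
  rw [div_le_iff₀ hdpos, mul_comm]
  linarith [key ▸ h1]

lemma grid_count (y : ℝ) (c : ℤ) (b : ℕ) (hb : 0 < b) (hcb : Int.gcd c b = 1) (ε : ℝ) (hε : 0 < ε) :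
    (((range b).filter (fun i : ℕ => nf (y + (i:ℝ) * ((c:ℝ)/(b:ℝ))) < ε)).card : ℝ) ≤ 2*ε*(b:ℝ) + 1 := by
  have hbR : (0:ℝ) < b := by exact_mod_cast hb
  set S := (range b).filter (fun i : ℕ => nf (y + (i:ℝ) * ((c:ℝ)/(b:ℝ))) < ε) with hS
  set F : ℕ → ℤ := fun i => i * c - b * round (y + (i:ℝ) * ((c:ℝ)/(b:ℝ))) with hF
  set l : ℤ := ⌈-(b:ℝ)*y - ε*(b:ℝ)⌉ with hl
  set u : ℤ := ⌊-(b:ℝ)*y + ε*(b:ℝ)⌋ with hu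
  have harg : ∀ i : ℕ, (b:ℝ) * (y + (i:ℝ) * ((c:ℝ)/(b:ℝ)) - round (y + (i:ℝ) * ((c:ℝ)/(b:ℝ)))) = ((F i : ℤ) : ℝ) + (b:ℝ)*y := by
    intro i
    have : ((F i : ℤ) : ℝ) = (i:ℝ)*(c:ℝ) - (b:ℝ) * (round (y + (i:ℝ) * ((c:ℝ)/(b:ℝ))) : ℤ) := by
      rw [hF]; push_cast; ring
    rw [this]
    field_simp
    ring
  have key : ∀ i ∈ S, |((F i : ℤ) : ℝ) + (b:ℝ)*y| < ε * (b:ℝ) := by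
    intro i hi
    have hnf : nf (y + (i:ℝ) * ((c:ℝ)/(b:ℝ))) < ε := (Finset.mem_filter.mp hi).2
    have heq : |((F i : ℤ) : ℝ) + (b:ℝ)*y| = (b:ℝ) * nf (y + (i:ℝ) * ((c:ℝ)/(b:ℝ))) := by
      rw [← harg i, abs_mul, abs_of_pos hbR]
      rfl
    rw [heq]
    calc (b:ℝ) * nf (y + (i:ℝ) * ((c:ℝ)/(b:ℝ))) < (b:ℝ) * ε := (mul_lt_mul_iff_right₀ hbR).mpr hnf
    _ = ε * (b:ℝ) := by ring
  have hmaps : ∀ i ∈ S, F i ∈ Finset.Icc l u := by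
    intro i hi
    have h1 := abs_lt.mp (key i hi)
    rw [Finset.mem_Icc]
    constructor
    · rw [hl]; apply Int.ceil_le.mpr; push_cast; linarith [h1.1]
    · rw [hu]; apply Int.le_floor.mpr; push_cast; linarith [h1.2]
  have hinj : Set.InjOn F (↑S : Set ℕ) := by
    intro i hi i' hi' hFe
    have hiS : i ∈ S := Finset.mem_coe.mp hi
    have hi'S : i' ∈ S := Finset.mem_coe.mp hi'
    have hib : i < b := Finset.mem_range.mp (Finset.mem_of_mem_filter _ hiS)
    have hi'b : i' < b := Finset.mem_range.mp (Finset.mem_of_mem_filter _ hi'S)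
    have hFee : (i:ℤ) * c - b * round (y + (i:ℝ) * ((c:ℝ)/(b:ℝ))) = (i':ℤ) * c - b * round (y + (i':ℝ) * ((c:ℝ)/(b:ℝ))) := hFe
    have hdvd : (b:ℤ) ∣ ((i:ℤ) - (i':ℤ)) * c := by
      refine ⟨round (y + (i:ℝ) * ((c:ℝ)/(b:ℝ))) - round (y + (i':ℝ) * ((c:ℝ)/(b:ℝ))), ?_⟩
      linarith [hFee]
    have hcop : Int.gcd (b:ℤ) c = 1 := by rw [Int.gcd_comm]; exact hcb
    have hdvd' : (b:ℤ) ∣ c * ((i:ℤ) - (i':ℤ)) := by rwa [mul_comm] at hdvd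
    have hdvd2 : (b:ℤ) ∣ ((i:ℤ) - (i':ℤ)) := Int.dvd_of_dvd_mul_right_of_gcd_one hdvd' hcop
    have hz : (i:ℤ) - (i':ℤ) = 0 := Int.eq_zero_of_abs_lt_dvd hdvd2 (by rw [abs_lt]; omega)
    omega
  have hcard : S.card ≤ (Finset.Icc l u).card :=
    Finset.card_le_card_of_injOn F hmaps hinj
  have hcard2 : ((Finset.Icc l u).card : ℝ) ≤ 2*ε*(b:ℝ) + 1 := by
    rw [Int.card_Icc]
    have h1 : (u:ℝ) ≤ -(b:ℝ)*y + ε*(b:ℝ) := Int.floor_le _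
    have h2 : -(b:ℝ)*y - ε*(b:ℝ) ≤ (l:ℝ) := Int.le_ceil _
    rcases le_or_gt (u + 1 - l) 0 with h | h
    · rw [Int.toNat_of_nonpos h]
      simp
      positivity
    · have heq : ((u + 1 - l).toNat : ℝ) = ((u + 1 - l : ℤ) : ℝ) := by
        exact_mod_cast congrArg (Int.cast : ℤ → ℝ) (Int.toNat_of_nonneg (le_of_lt h))
      rw [heq]
      push_cast
      linarith
  calc (S.card : ℝ) ≤ ((Finset.Icc l u).card : ℝ) := by exact_mod_cast hcard
  _ ≤ _ := hcard2

lemma per_coord (B : ℕ) (hB : 0 < B) (γ : ℝ) (h : ∀ k : ℕ, 0 < k → k ≤ B → nf ((k:ℝ) * γ) ≠ 0)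
    (β : ℝ) (hβ : 0 < β) :
    ∃ w : ℕ, B < w ∧ ∀ y : ℝ,
      (((range w).filter (fun i : ℕ => nf (y + (i:ℝ) * γ) < β)).card : ℝ) ≤ 2*β*(w:ℝ) + 3 := by
  -- the minimum of nf (k γ) over 1 ≤ k ≤ B
  have hne : ((Finset.Icc 1 B).image (fun k : ℕ => nf ((k:ℝ) * γ))).Nonempty := by
    refine ⟨nf ((1:ℝ) * γ), Finset.mem_image.mpr ⟨1, Finset.mem_Icc.mpr ⟨le_refl 1, hB⟩, by norm_num⟩⟩
  set c₀ := ((Finset.Icc 1 B).image (fun k : ℕ => nf ((k:ℝ) * γ))).min' hne with hc₀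
  have hc₀pos : 0 < c₀ := by
    have hmem := Finset.min'_mem _ hne
    rw [Finset.mem_image] at hmem
    obtain ⟨k, hk, hkval⟩ := hmem
    rw [Finset.mem_Icc] at hk
    rw [hc₀, ← hkval]
    exact lt_of_le_of_ne (nf_nonneg _) (Ne.symm (h k hk.1 hk.2))
  have hc₀le : ∀ k : ℕ, 1 ≤ k → k ≤ B → c₀ ≤ nf ((k:ℝ) * γ) := by
    intro k h1 h2
    apply Finset.min'_le
    exact Finset.mem_image.mpr ⟨k, Finset.mem_Icc.mpr ⟨h1, h2⟩, rfl⟩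
  -- choose n₀ with 1/(n₀+1) < min c₀ β
  obtain ⟨n₁, hn₁⟩ := exists_nat_one_div_lt (lt_min_iff.mpr ⟨hc₀pos, hβ⟩ : (0:ℝ) < min c₀ β)
  set n₀ := n₁ + 1 with hn₀
  have hn₀pos : 0 < n₀ := Nat.succ_pos _
  have hsmall : 1 / ((n₀:ℝ) + 1) < min c₀ β := by
    have h1 : 1 / ((n₀:ℝ) + 1) ≤ 1 / ((n₁:ℝ) + 1) := by
      apply div_le_div_of_nonneg_left (by norm_num) (by positivity)
      rw [hn₀]; push_cast; linarith
    linarith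
  -- Dirichlet
  obtain ⟨j, k, hk0, hkn, happ⟩ := Real.exists_int_int_abs_mul_sub_le γ hn₀pos
  set d : ℕ := Int.gcd j k with hd
  have hdpos : 0 < d := by
    rw [hd]
    apply Int.gcd_pos_of_ne_zero_right
    omega
  set k' : ℤ := k / d with hk'
  set j' : ℤ := j / d with hj'
  have hdk : (d:ℤ) ∣ k := Int.gcd_dvd_right j k
  have hdj : (d:ℤ) ∣ j := Int.gcd_dvd_left j k
  have hkeq : k = d * k' := (Int.mul_ediv_cancel' hdk).symm
  have hjeq : j = d * j' := (Int.mul_ediv_cancel' hdj).symm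
  have hk'pos : 0 < k' := by
    rcases lt_trichotomy k' 0 with hlt | heq | hgt
    · exfalso; nlinarith [hkeq, hk0, (show (0:ℤ) < d by exact_mod_cast hdpos)]
    · exfalso; rw [heq, mul_zero] at hkeq; omega
    · exact hgt
  have hcop : Int.gcd j' k' = 1 := Int.gcd_div_gcd_div_gcd hdpos
  have happ' : |(k':ℝ) * γ - (j':ℝ)| ≤ 1 / ((n₀:ℝ) + 1) := by
    have hdR : (1:ℝ) ≤ (d:ℝ) := by exact_mod_cast hdpos
    have heq : (k:ℝ) * γ - (j:ℝ) = (d:ℝ) * ((k':ℝ) * γ - (j':ℝ)) := by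
      have h1 : (k:ℝ) = (d:ℝ) * (k':ℝ) := by exact_mod_cast congrArg (Int.cast : ℤ → ℝ) hkeq
      have h2 : (j:ℝ) = (d:ℝ) * (j':ℝ) := by exact_mod_cast congrArg (Int.cast : ℤ → ℝ) hjeq
      rw [h1, h2]; ring
    have := happ
    rw [heq, abs_mul, abs_of_pos (by linarith : (0:ℝ) < (d:ℝ))] at this
    nlinarith [abs_nonneg ((k':ℝ) * γ - (j':ℝ))]
  set w : ℕ := k'.toNat with hw
  have hwk' : (w:ℤ) = k' := Int.toNat_of_nonneg (le_of_lt hk'pos)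
  have hwpos : 0 < w := by omega
  have hwn₀ : w ≤ n₀ := by
    have : k' ≤ k := by nlinarith [(show (1:ℤ) ≤ d by exact_mod_cast hdpos)]
    omega
  -- B < w
  have hBw : B < w := by
    by_contra hc
    push_neg at hc
    have h1 : nf ((w:ℝ) * γ) ≤ |(w:ℝ) * γ - (j':ℝ)| := nf_le_abs_sub_int _ _
    have h2 : (w:ℝ) = (k':ℝ) := by exact_mod_cast congrArg (Int.cast : ℤ → ℝ) hwk'
    have h3 : nf ((w:ℝ) * γ) < c₀ := by
      rw [h2]
      calc nf ((k':ℝ) * γ) ≤ |(k':ℝ) * γ - (j':ℝ)| := nf_le_abs_sub_int _ _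
      _ ≤ 1 / ((n₀:ℝ) + 1) := happ'
      _ < min c₀ β := hsmall
      _ ≤ c₀ := min_le_left _ _
    exact absurd h3 (not_lt.mpr (hc₀le w hwpos hc))
  refine ⟨w, hBw, ?_⟩
  intro y
  set ε : ℝ := β + 1 / ((n₀:ℝ) + 1) with hε
  have hεpos : 0 < ε := by positivity
  have hsub : (range w).filter (fun i : ℕ => nf (y + (i:ℝ) * γ) < β)
      ⊆ (range w).filter (fun i : ℕ => nf (y + (i:ℝ) * ((j':ℝ)/(w:ℝ))) < ε) := by
    intro i hi
    rw [Finset.mem_filter] at hi ⊢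
    refine ⟨hi.1, ?_⟩
    have hiw : i < w := Finset.mem_range.mp hi.1
    have hlip : nf (y + (i:ℝ) * ((j':ℝ)/(w:ℝ))) ≤ nf (y + (i:ℝ) * γ) + |(i:ℝ) * ((j':ℝ)/(w:ℝ)) - (i:ℝ) * γ| := by
      have := nf_lipschitz (y + (i:ℝ) * ((j':ℝ)/(w:ℝ))) (y + (i:ℝ) * γ)
      have harg : y + (i:ℝ) * ((j':ℝ)/(w:ℝ)) - (y + (i:ℝ) * γ) = (i:ℝ) * ((j':ℝ)/(w:ℝ)) - (i:ℝ) * γ := by ring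
      rwa [harg] at this
    have hbound : |(i:ℝ) * ((j':ℝ)/(w:ℝ)) - (i:ℝ) * γ| ≤ 1 / ((n₀:ℝ) + 1) := by
      have hwR : (0:ℝ) < (w:ℝ) := by exact_mod_cast hwpos
      have h2 : (w:ℝ) = (k':ℝ) := by exact_mod_cast congrArg (Int.cast : ℤ → ℝ) hwk'
      have heq2 : (i:ℝ) * ((j':ℝ)/(w:ℝ)) - (i:ℝ) * γ = ((i:ℝ)/(w:ℝ)) * ((j':ℝ) - (w:ℝ) * γ) := by
        field_simp
      rw [heq2, abs_mul]
      have hile : |(i:ℝ)/(w:ℝ)| ≤ 1 := by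
        rw [abs_of_nonneg (by positivity)]
        rw [div_le_one hwR]
        exact_mod_cast le_of_lt hiw
      have h3 : |(j':ℝ) - (w:ℝ) * γ| ≤ 1 / ((n₀:ℝ) + 1) := by
        rw [h2, abs_sub_comm]
        exact happ'
      calc |(i:ℝ)/(w:ℝ)| * |(j':ℝ) - (w:ℝ) * γ| ≤ 1 * (1 / ((n₀:ℝ) + 1)) := by
            apply mul_le_mul hile h3 (abs_nonneg _) (by norm_num)
      _ = 1 / ((n₀:ℝ) + 1) := by ring
    calc nf (y + (i:ℝ) * ((j':ℝ)/(w:ℝ))) ≤ nf (y + (i:ℝ) * γ) + |(i:ℝ) * ((j':ℝ)/(w:ℝ)) - (i:ℝ) * γ| := hlip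
    _ < β + 1 / ((n₀:ℝ) + 1) := by have := hi.2; linarith
  have hcop' : Int.gcd j' (w:ℤ) = 1 := by rw [hwk']; exact hcop
  have hgc := grid_count y j' w hwpos hcop' ε hεpos
  have hcard : (((range w).filter (fun i : ℕ => nf (y + (i:ℝ) * γ) < β)).card : ℝ)
      ≤ 2*ε*(w:ℝ) + 1 := by
    calc (((range w).filter (fun i : ℕ => nf (y + (i:ℝ) * γ) < β)).card : ℝ)
        ≤ (((range w).filter (fun i : ℕ => nf (y + (i:ℝ) * ((j':ℝ)/(w:ℝ))) < ε)).card : ℝ) := by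
          exact_mod_cast Finset.card_le_card hsub
    _ ≤ 2*ε*(w:ℝ) + 1 := hgc
  have hfinal : 2*ε*(w:ℝ) + 1 ≤ 2*β*(w:ℝ) + 3 := by
    have hwn : (w:ℝ) ≤ (n₀:ℝ) := by exact_mod_cast hwn₀
    have h4 : 2 * (1 / ((n₀:ℝ) + 1)) * (w:ℝ) ≤ 2 := by
      have hpos : (0:ℝ) < (n₀:ℝ) + 1 := by positivity
      rw [show 2 * (1 / ((n₀:ℝ) + 1)) * (w:ℝ) = 2*(w:ℝ)/((n₀:ℝ)+1) by ring, div_le_iff₀ hpos]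
      linarith
    rw [hε]
    nlinarith
  linarith

lemma count_blocks (γ x β A : ℝ) (w : ℕ) (hA0 : 0 ≤ A)
    (hblk : ∀ y : ℝ, (((range w).filter (fun i : ℕ => nf (y + (i:ℝ) * γ) < β)).card : ℝ) ≤ A) :
    ∀ T : ℕ, (((range (T*w)).filter (fun m : ℕ => nf (x + (m:ℝ) * γ) < β)).card : ℝ) ≤ T * A := by
  intro T
  induction T with
  | zero => simp
  | succ T ih =>
    have hsplit : range ((T+1)*w) = range (T*w) ∪ (range w).map (addLeftEmbedding (T*w)) := by
      rw [Nat.succ_mul]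
      exact Finset.range_add _ _
    rw [hsplit, Finset.filter_union]
    have hcard := Finset.card_union_le
      ((range (T*w)).filter (fun m : ℕ => nf (x + (m:ℝ) * γ) < β))
      (((range w).map (addLeftEmbedding (T*w))).filter (fun m : ℕ => nf (x + (m:ℝ) * γ) < β))
    have hmap : ((((range w).map (addLeftEmbedding (T*w))).filter (fun m : ℕ => nf (x + (m:ℝ) * γ) < β)).card : ℝ) ≤ A := by
      rw [Finset.filter_map, Finset.card_map]
      have heq : (range w).filter ((fun m : ℕ => nf (x + (m:ℝ) * γ) < β) ∘ (addLeftEmbedding (T*w)))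
          = (range w).filter (fun i : ℕ => nf ((x + ((T*w : ℕ):ℝ) * γ) + (i:ℝ) * γ) < β) := by
        apply Finset.filter_congr
        intro i _
        have harg : x + (((T*w + i : ℕ)):ℝ) * γ = (x + ((T*w : ℕ):ℝ) * γ) + (i:ℝ) * γ := by
          push_cast; ring
        simp only [Function.comp, addLeftEmbedding_apply]
        rw [harg]
      rw [heq]
      exact hblk _
    calc ((((range (T*w)).filter (fun m : ℕ => nf (x + (m:ℝ) * γ) < β)) ∪ (((range w).map (addLeftEmbedding (T*w))).filter (fun m : ℕ => nf (x + (m:ℝ) * γ) < β))).card : ℝ)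
        ≤ (((range (T*w)).filter (fun m : ℕ => nf (x + (m:ℝ) * γ) < β)).card : ℝ)
          + ((((range w).map (addLeftEmbedding (T*w))).filter (fun m : ℕ => nf (x + (m:ℝ) * γ) < β)).card : ℝ) := by
          exact_mod_cast hcard
    _ ≤ T * A + A := by linarith
    _ = (T+1 : ℕ) * A := by push_cast; ring

lemma count_N (γ x β A : ℝ) (w : ℕ) (hw : 0 < w) (hA0 : 0 ≤ A)
    (hblk : ∀ y : ℝ, (((range w).filter (fun i : ℕ => nf (y + (i:ℝ) * γ) < β)).card : ℝ) ≤ A)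
    (N : ℕ) :
    (((range N).filter (fun m : ℕ => nf (x + (m:ℝ) * γ) < β)).card : ℝ) ≤ ((N:ℝ)/(w:ℝ) + 1) * A := by
  set T : ℕ := N / w + 1 with hT
  have hNT : N ≤ T * w := by
    have h1 := Nat.div_add_mod N w
    have h2 := Nat.mod_lt N hw
    have : T * w = w * (N / w) + w := by rw [hT]; ring
    omega
  have hsub : (range N).filter (fun m : ℕ => nf (x + (m:ℝ) * γ) < β)
      ⊆ (range (T*w)).filter (fun m : ℕ => nf (x + (m:ℝ) * γ) < β) :=
    Finset.filter_subset_filter _ (Finset.range_subset_range.mpr hNT)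
  have h1 : (((range N).filter (fun m : ℕ => nf (x + (m:ℝ) * γ) < β)).card : ℝ)
      ≤ (T:ℝ) * A := by
    calc (((range N).filter (fun m : ℕ => nf (x + (m:ℝ) * γ) < β)).card : ℝ)
        ≤ (((range (T*w)).filter (fun m : ℕ => nf (x + (m:ℝ) * γ) < β)).card : ℝ) := by
          exact_mod_cast Finset.card_le_card hsub
    _ ≤ T * A := count_blocks γ x β A w hA0 hblk T
  have hTle : (T:ℝ) ≤ (N:ℝ)/(w:ℝ) + 1 := by
    rw [hT]
    push_cast
    have := Nat.cast_div_le (m := N) (n := w) (α := ℝ)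
    linarith
  calc (((range N).filter (fun m : ℕ => nf (x + (m:ℝ) * γ) < β)).card : ℝ) ≤ (T:ℝ) * A := h1
  _ ≤ ((N:ℝ)/(w:ℝ) + 1) * A := by
      apply mul_le_mul_of_nonneg_right hTle hA0

def twr (B n : ℕ) : ℕ → ℕ
  | 0 => 1
  | i+1 => twr B n i * (B * twr B n i)^n

noncomputable def Dq {n : ℕ} (B : ℕ) (q : Fin n → ℕ) : ℕ → ℕ
  | 0 => 1
  | i+1 => Nat.lcm (Dq B q i) ((Finset.univ.filter (fun j => 0 < q j ∧ q j ≤ B * Dq B q i)).lcm q)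

lemma twr_pos (B n : ℕ) (hB : 0 < B) : ∀ i, 0 < twr B n i := by
  intro i
  induction i with
  | zero => simp [twr]
  | succ i ih =>
    simp only [twr]
    positivity

lemma twr_mono (B n : ℕ) (hB : 0 < B) : Monotone (twr B n) := by
  apply monotone_nat_of_le_succ
  intro i
  have h1 := twr_pos B n hB i
  have h2 : 0 < (B * twr B n i)^n := by positivity
  calc twr B n i = twr B n i * 1 := (mul_one _).symm
  _ ≤ twr B n i * (B * twr B n i)^n := by
      apply Nat.mul_le_mul_left
      omega
  _ = twr B n (i+1) := rfl

section

variable {n : ℕ} (B : ℕ) (q : Fin n → ℕ)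

lemma Dq_pos (i : ℕ) : 0 < Dq B q i := by
  induction i with
  | zero => simp [Dq]
  | succ i ih =>
    simp only [Dq]
    apply Nat.pos_of_ne_zero
    apply Nat.lcm_ne_zero
    · omega
    · intro h0
      rw [Finset.lcm_eq_zero_iff] at h0
      simp only [Set.mem_image, Finset.mem_coe, Finset.mem_filter] at h0
      obtain ⟨j, ⟨_, hj, _⟩, hj0⟩ := h0
      omega

lemma Dq_dvd_succ (i : ℕ) : Dq B q i ∣ Dq B q (i+1) := Nat.dvd_lcm_left _ _

lemma Dq_le_twr (hB : 0 < B) (hn : 1 ≤ n) (i : ℕ) : Dq B q i ≤ twr B n i := by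
  induction i with
  | zero => simp [Dq, twr]
  | succ i ih =>
    have hDpos := Dq_pos B q i
    set F := (Finset.univ.filter (fun j => 0 < q j ∧ q j ≤ B * Dq B q i)).lcm q with hF
    have hFdvd : F ∣ ∏ j ∈ Finset.univ.filter (fun j => 0 < q j ∧ q j ≤ B * Dq B q i), q j := by
      apply Finset.lcm_dvd
      intro j hj
      exact Finset.dvd_prod_of_mem q hj
    have hprodpos : 0 < ∏ j ∈ Finset.univ.filter (fun j => 0 < q j ∧ q j ≤ B * Dq B q i), q j := by
      apply Finset.prod_pos
      intro j hj
      exact (Finset.mem_filter.mp hj).2.1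
    have hFpos : 0 < F := Nat.pos_of_dvd_of_pos hFdvd hprodpos
    have hprodle : ∏ j ∈ Finset.univ.filter (fun j => 0 < q j ∧ q j ≤ B * Dq B q i), q j ≤ (B * Dq B q i)^n := by
      calc ∏ j ∈ Finset.univ.filter (fun j => 0 < q j ∧ q j ≤ B * Dq B q i), q j
          ≤ (B * Dq B q i) ^ (Finset.univ.filter (fun j => 0 < q j ∧ q j ≤ B * Dq B q i)).card := by
            apply Finset.prod_le_pow_card
            intro j hj
            exact (Finset.mem_filter.mp hj).2.2
      _ ≤ (B * Dq B q i)^n := by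
            apply Nat.pow_le_pow_right (by positivity)
            calc (Finset.univ.filter (fun j => 0 < q j ∧ q j ≤ B * Dq B q i)).card
                ≤ Finset.univ.card := Finset.card_filter_le _ _
            _ = n := Finset.card_fin n
    have hlcm_le : Dq B q (i+1) ≤ Dq B q i * F := by
      apply Nat.le_of_dvd (by positivity)
      exact Nat.lcm_dvd (dvd_mul_right _ _) (dvd_mul_left _ _)
    calc Dq B q (i+1) ≤ Dq B q i * F := hlcm_le
    _ ≤ Dq B q i * (B * Dq B q i)^n := by
        apply Nat.mul_le_mul_left
        exact le_trans (Nat.le_of_dvd hprodpos hFdvd) hprodle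
    _ ≤ twr B n i * (B * twr B n i)^n := by
        apply Nat.mul_le_mul ih
        apply Nat.pow_le_pow_left
        exact Nat.mul_le_mul_left B ih
    _ = twr B n (i+1) := rfl

lemma Dq_stable (hB : 0 < B) : ∃ i, i ≤ n ∧ ∀ j, q j = 0 ∨ q j ∣ Dq B q i ∨ B * Dq B q i < q j := by
  by_contra hc
  -- every i ≤ n is unstable
  have hwit : ∀ i, i ≤ n → ∃ j, q j ≠ 0 ∧ ¬ q j ∣ Dq B q i ∧ q j ≤ B * Dq B q i := by
    intro i hi
    by_contra hno
    push_neg at hno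
    refine hc ⟨i, hi, fun j => ?_⟩
    by_cases h0 : q j = 0
    · exact Or.inl h0
    · rcases Nat.lt_or_ge (B * Dq B q i) (q j) with hgt | hle
      · exact Or.inr (Or.inr hgt)
      · refine Or.inr (Or.inl ?_)
        by_contra hdvd
        exact absurd (hno j h0 hdvd) (by omega)
  set Cap : ℕ → Finset (Fin n) := fun i => Finset.univ.filter (fun j => 0 < q j ∧ q j ∣ Dq B q i) with hCap
  have hmono : ∀ i, Cap i ⊆ Cap (i+1) := by
    intro i j hj
    rw [hCap, Finset.mem_filter] at hj ⊢
    exact ⟨hj.1, hj.2.1, dvd_trans hj.2.2 (Dq_dvd_succ B q i)⟩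
  have hstrict : ∀ i, i ≤ n → (Cap i).card < (Cap (i+1)).card := by
    intro i hi
    obtain ⟨j, hj1, hj2, hj3⟩ := hwit i hi
    apply Finset.card_lt_card
    rw [Finset.ssubset_iff_of_subset (hmono i)]
    refine ⟨j, ?_, ?_⟩
    · rw [hCap, Finset.mem_filter]
      refine ⟨Finset.mem_univ _, Nat.pos_of_ne_zero hj1, ?_⟩
      calc q j ∣ (Finset.univ.filter (fun j' => 0 < q j' ∧ q j' ≤ B * Dq B q i)).lcm q := by
            apply Finset.dvd_lcm
            rw [Finset.mem_filter]
            exact ⟨Finset.mem_univ _, Nat.pos_of_ne_zero hj1, hj3⟩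
      _ ∣ Dq B q (i+1) := Nat.dvd_lcm_right _ _
    · rw [hCap, Finset.mem_filter]
      intro hmem
      exact hj2 hmem.2.2
  have hchain : ∀ i, i ≤ n + 1 → i ≤ (Cap i).card := by
    intro i
    induction i with
    | zero => omega
    | succ i ih =>
      intro hi
      have h1 := ih (by omega)
      have h2 := hstrict i (by omega)
      omega
  have hfinal := hchain (n+1) (le_refl _)
  have : (Cap (n+1)).card ≤ n := by
    calc (Cap (n+1)).card ≤ Finset.univ.card := Finset.card_filter_le _ _
    _ = n := Finset.card_fin n
  omega

end

set_option maxHeartbeats 1000000 in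
theorem main_real (n : ℕ) (hn : 1 ≤ n) :
    ∃ δ : ℝ, 0 < δ ∧ ∀ α : Fin n → ℝ, (∀ j, nf (α j) ≠ 0) →
      ∃ k : ℕ, 0 < k ∧ ∀ j, δ ≤ nf ((k:ℝ) * α j) := by
  classical
  set B : ℕ := 12 * n with hB
  have hBpos : 0 < B := by omega
  have hnR : (1:ℝ) ≤ (n:ℝ) := by exact_mod_cast hn
  have hnpos : (0:ℝ) < (n:ℝ) := by linarith
  set β : ℝ := 1 / (8 * (n:ℝ)) with hβ
  have hβpos : 0 < β := by rw [hβ]; positivity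
  have hTpos : 0 < twr B n n := twr_pos B n hBpos n
  have hTposR : (0:ℝ) < (twr B n n : ℝ) := by exact_mod_cast hTpos
  set δ : ℝ := min (1 / (twr B n n : ℝ)) β with hδ
  have hδpos : 0 < δ := lt_min (by positivity) hβpos
  refine ⟨δ, hδpos, ?_⟩
  intro α hα
  set q : Fin n → ℕ := fun j => den (α j) with hq
  obtain ⟨i₀, hi₀, hstable⟩ := Dq_stable B q hBpos
  set D : ℕ := Dq B q i₀ with hD
  have hDpos : 0 < D := Dq_pos B q i₀
  have hDposR : (0:ℝ) < (D:ℝ) := by exact_mod_cast hDpos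
  have hDle : D ≤ twr B n n := le_trans (Dq_le_twr B q hBpos hn i₀) (twr_mono B n hBpos hi₀)
  set S : Finset (Fin n) := Finset.univ.filter (fun j => ¬ (0 < q j ∧ q j ∣ D)) with hS
  -- hypothesis of per_coord holds for noncaptured coordinates
  have hhyp : ∀ j ∈ S, ∀ k' : ℕ, 0 < k' → k' ≤ B → nf ((k':ℝ) * ((D:ℝ) * α j)) ≠ 0 := by
    intro j hj k' hk'pos hk'B hzero
    rw [nf_eq_zero_iff] at hzero
    obtain ⟨z, hz⟩ := hzero
    have hzz : ((k' * D : ℕ):ℝ) * α j = z := by push_cast; push_cast at hz; linarith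
    have hdvd : q j ∣ k' * D := den_dvd (α j) (k'*D) (by positivity) z hzz
    have hqne : q j ≠ 0 := by
      intro h0
      rw [h0] at hdvd
      have : k' * D = 0 := Nat.eq_zero_of_zero_dvd hdvd
      have : 0 < k' * D := by positivity
      omega
    have hjS := (Finset.mem_filter.mp hj).2
    rcases hstable j with h0 | hdvdD | hgt
    · exact hqne h0
    · exact hjS ⟨Nat.pos_of_ne_zero hqne, hdvdD⟩
    · have h1 : q j ≤ k' * D := Nat.le_of_dvd (by positivity) hdvd
      have h2 : k' * D ≤ B * D := Nat.mul_le_mul_right D hk'B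
      omega
  -- choose block lengths
  have hch : ∀ j : Fin n, ∃ w : ℕ, B < w ∧ (j ∈ S → ∀ y : ℝ,
      (((range w).filter (fun i : ℕ => nf (y + (i:ℝ) * ((D:ℝ) * α j)) < β)).card : ℝ) ≤ 2*β*(w:ℝ) + 3) := by
    intro j
    by_cases hj : j ∈ S
    · obtain ⟨w, hw1, hw2⟩ := per_coord B hBpos ((D:ℝ) * α j) (hhyp j hj) β hβpos
      exact ⟨w, hw1, fun _ => hw2⟩
    · exact ⟨B+1, by omega, fun h => absurd h hj⟩
  choose w hwB hwblk using hch
  obtain ⟨N, hN⟩ : ∃ N : ℕ, N = 2 * (∑ j ∈ S, (w j + 3)) + 2 := ⟨_, rfl⟩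
  have hNposR : (0:ℝ) < (N:ℝ) := by
    have : 0 < N := by omega
    exact_mod_cast this
  obtain ⟨W, hW⟩ : ∃ W : ℝ, W = ((∑ j ∈ S, (w j + 3) : ℕ) : ℝ) := ⟨_, rfl⟩
  have hNW : (N:ℝ) = 2 * W + 2 := by rw [hN, hW]; push_cast; ring
  set bad : Fin n → Finset ℕ := fun j => (range N).filter
      (fun m : ℕ => nf (α j + (m:ℝ) * ((D:ℝ) * α j)) < β) with hbad
  -- per-coordinate counting bound
  have hbadcard : ∀ j ∈ S, ((bad j).card : ℝ) ≤ (2*β + 3/(B:ℝ)) * (N:ℝ) + ((w j : ℝ) + 3) := by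
    intro j hj
    have hwpos : 0 < w j := by have := hwB j; omega
    have hwposR : (0:ℝ) < (w j : ℝ) := by exact_mod_cast hwpos
    have hBR : (0:ℝ) < (B:ℝ) := by exact_mod_cast hBpos
    have hBw : (B:ℝ) ≤ (w j : ℝ) := by exact_mod_cast le_of_lt (hwB j)
    have h1 : ((bad j).card : ℝ) ≤ ((N:ℝ)/(w j:ℝ) + 1) * (2*β*(w j:ℝ) + 3) :=
      count_N ((D:ℝ) * α j) (α j) β (2*β*(w j:ℝ) + 3) (w j) hwpos (by positivity)
        (hwblk j hj) N
    have hexp : ((N:ℝ)/(w j:ℝ) + 1) * (2*β*(w j:ℝ) + 3)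
        = 2*β*(N:ℝ) + 3*((N:ℝ)/(w j:ℝ)) + 2*β*(w j:ℝ) + 3 := by
      field_simp
      ring
    have h2 : 3*((N:ℝ)/(w j:ℝ)) ≤ 3*((N:ℝ)/(B:ℝ)) := by
      have := div_le_div_of_nonneg_left (le_of_lt hNposR) hBR hBw
      linarith
    have h3 : 2*β*(w j:ℝ) ≤ (w j:ℝ) := by
      have h2b : 2*β ≤ 1 := by
        rw [hβ, mul_one_div, div_le_one (by positivity)]
        linarith
      nlinarith
    have h4 : 3*((N:ℝ)/(B:ℝ)) = (3/(B:ℝ))*(N:ℝ) := by ring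
    calc ((bad j).card : ℝ) ≤ 2*β*(N:ℝ) + 3*((N:ℝ)/(w j:ℝ)) + 2*β*(w j:ℝ) + 3 := by
          rw [← hexp]; exact h1
    _ ≤ 2*β*(N:ℝ) + (3/(B:ℝ))*(N:ℝ) + ((w j:ℝ) + 3) := by
          rw [← h4]; linarith
    _ = (2*β + 3/(B:ℝ)) * (N:ℝ) + ((w j : ℝ) + 3) := by ring
  -- total bound
  have hsum : ∑ j ∈ S, ((bad j).card : ℝ) < (N:ℝ) := by
    have hcardS : (S.card : ℝ) ≤ (n:ℝ) := by
      have hle : S.card ≤ n := by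
        calc S.card ≤ Finset.univ.card := Finset.card_filter_le _ _
        _ = n := Finset.card_fin n
      exact_mod_cast hle
    have hfac : (2*β + 3/(B:ℝ)) = 1/(2*(n:ℝ)) := by
      rw [hβ, hB]
      push_cast
      field_simp
      ring
    have hstep : ∑ j ∈ S, ((bad j).card : ℝ)
        ≤ ∑ j ∈ S, ((2*β + 3/(B:ℝ)) * (N:ℝ) + ((w j : ℝ) + 3)) :=
      Finset.sum_le_sum hbadcard
    have hsplit : ∑ j ∈ S, ((2*β + 3/(B:ℝ)) * (N:ℝ) + ((w j : ℝ) + 3))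
        = S.card * ((2*β + 3/(B:ℝ)) * (N:ℝ)) + W := by
      rw [Finset.sum_add_distrib, Finset.sum_const, nsmul_eq_mul, hW]
      push_cast
      ring
    have hbound : (S.card : ℝ) * ((2*β + 3/(B:ℝ)) * (N:ℝ)) ≤ (N:ℝ)/2 := by
      rw [hfac]
      have heq : (n:ℝ) * ((1/(2*(n:ℝ))) * (N:ℝ)) = (N:ℝ)/2 := by
        field_simp
      have hle2 : (S.card : ℝ) * ((1/(2*(n:ℝ))) * (N:ℝ)) ≤ (n:ℝ) * ((1/(2*(n:ℝ))) * (N:ℝ)) :=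
        mul_le_mul_of_nonneg_right hcardS (mul_nonneg (by positivity) (le_of_lt hNposR))
      linarith
    have hWval : W = ((N:ℝ) - 2)/2 := by linarith [hNW]
    calc ∑ j ∈ S, ((bad j).card : ℝ) ≤ S.card * ((2*β + 3/(B:ℝ)) * (N:ℝ)) + W := by
          rw [← hsplit]; exact hstep
    _ ≤ (N:ℝ)/2 + ((N:ℝ) - 2)/2 := by linarith [hbound, hWval.le, hWval.ge]
    _ < (N:ℝ) := by linarith
  -- extract a good m
  have hgood : ∃ m, m ∈ range N ∧ ∀ j ∈ S, m ∉ bad j := by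
    by_contra hcm
    push_neg at hcm
    have hsub : range N ⊆ S.biUnion bad := by
      intro m hm
      obtain ⟨j, hj1, hj2⟩ := hcm m hm
      exact Finset.mem_biUnion.mpr ⟨j, hj1, hj2⟩
    have h1 : N ≤ (S.biUnion bad).card := by
      calc N = (range N).card := (Finset.card_range N).symm
      _ ≤ (S.biUnion bad).card := Finset.card_le_card hsub
    have h2 : (S.biUnion bad).card ≤ ∑ j ∈ S, (bad j).card := Finset.card_biUnion_le
    have h3 : (N:ℝ) ≤ ∑ j ∈ S, ((bad j).card : ℝ) := by
      have := le_trans h1 h2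
      have hcast : ((∑ j ∈ S, (bad j).card : ℕ) : ℝ) = ∑ j ∈ S, ((bad j).card : ℝ) := by
        push_cast
        rfl
      rw [← hcast]
      exact_mod_cast this
    linarith
  obtain ⟨m, hmN, hmgood⟩ := hgood
  refine ⟨1 + m * D, by omega, ?_⟩
  intro j
  have hkey : ((1 + m * D : ℕ):ℝ) * α j = α j + (m:ℝ) * ((D:ℝ) * α j) := by
    push_cast
    ring
  rw [hkey]
  by_cases hj : j ∈ S
  · have hnb := hmgood j hj
    rw [hbad] at hnb
    have hge : ¬ (nf (α j + (m:ℝ) * ((D:ℝ) * α j)) < β) := by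
      intro hlt
      exact hnb (Finset.mem_filter.mpr ⟨hmN, hlt⟩)
    push_neg at hge
    calc δ ≤ β := min_le_right _ _
    _ ≤ _ := hge
  · -- captured coordinate
    have hcap : 0 < q j ∧ q j ∣ D := by
      by_contra hc
      exact hj (Finset.mem_filter.mpr ⟨Finset.mem_univ _, hc⟩)
    obtain ⟨hqpos, hqdvd⟩ := hcap
    obtain ⟨u, hu⟩ := hqdvd
    have hqj : q j = den (α j) := rfl
    have hqne : den (α j) ≠ 0 := by rw [← hqj]; omega
    obtain ⟨hqpos', z, hz⟩ := den_spec (α j) hqne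
    have hDR : (D:ℝ) = (q j:ℝ) * (u:ℝ) := by
      rw [hq]
      exact_mod_cast congrArg (fun t : ℕ => (t:ℝ)) hu
    have hzq : (q j : ℝ) * α j = z := hz
    have harr : α j + (m:ℝ) * ((D:ℝ) * α j) = α j + ((((m*u : ℕ) : ℤ) * z : ℤ):ℝ) := by
      push_cast
      rw [hDR]
      linear_combination ((m:ℝ) * (u:ℝ)) * hzq
    rw [harr, nf_add_int]
    have h1 : 1/(q j : ℝ) ≤ nf (α j) := one_div_den_le_nf (α j) hqne (hα j)
    have hqleD : q j ≤ D := Nat.le_of_dvd hDpos ⟨u, hu⟩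
    have hqposR : (0:ℝ) < (q j : ℝ) := by exact_mod_cast hqpos
    calc δ ≤ 1/(twr B n n : ℝ) := min_le_left _ _
    _ ≤ 1/(D:ℝ) := by
        apply one_div_le_one_div_of_le hDposR
        exact_mod_cast hDle
    _ ≤ 1/(q j:ℝ) := by
        apply one_div_le_one_div_of_le hqposR
        exact_mod_cast hqleD
    _ ≤ nf (α j) := h1

lemma jordan_ineq (u : ℝ) (h0 : 0 ≤ u) (h1 : u ≤ 1/2) : 2*u ≤ Real.sin (π * u) := by
  have hpi : (0:ℝ) < π := Real.pi_pos
  have hcc : ConcaveOn ℝ (Set.Icc 0 π) Real.sin := strictConcaveOn_sin_Icc.concaveOn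
  have hx : (0:ℝ) ∈ Set.Icc (0:ℝ) π := Set.mem_Icc.mpr ⟨le_refl _, le_of_lt hpi⟩
  have hy : (π/2) ∈ Set.Icc (0:ℝ) π := Set.mem_Icc.mpr ⟨by positivity, by linarith⟩
  have ha : (0:ℝ) ≤ 1 - 2*u := by linarith
  have hb : (0:ℝ) ≤ 2*u := by linarith
  have hab : (1 - 2*u) + 2*u = 1 := by ring
  have hkey := hcc.2 hx hy ha hb hab
  rw [smul_eq_mul, smul_eq_mul, smul_eq_mul, smul_eq_mul, Real.sin_zero, Real.sin_pi_div_two] at hkey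
  have harg : (1 - 2*u) * 0 + (2*u) * (π/2) = π * u := by ring
  rw [harg] at hkey
  linarith

lemma abs_sin_pi_ge (t : ℝ) : 2 * nf t ≤ |Real.sin (π * t)| := by
  set r := round t with hr
  have hu : |t - (r:ℝ)| ≤ 1/2 := abs_sub_round t
  have heq : Real.sin (π * t) = (-1)^r * Real.sin (π * (t - r)) := by
    have harg : π * t = π * (t - (r:ℝ)) + (r:ℝ) * π := by ring
    rw [harg, Real.sin_add_int_mul_pi]
  have habs : |Real.sin (π * t)| = |Real.sin (π * (t - (r:ℝ)))| := by
    rw [heq, abs_mul]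
    have hone : |((-1:ℝ))^r| = 1 := by
      rcases Int.even_or_odd r with he | ho
      · rw [he.neg_one_zpow, abs_one]
      · rw [ho.neg_one_zpow, abs_neg, abs_one]
    rw [hone, one_mul]
  rw [habs]
  have h2 : |Real.sin (π * (t - (r:ℝ)))| = |Real.sin (π * |t - (r:ℝ)|)| := by
    rcases abs_cases (t - (r:ℝ)) with ⟨h, _⟩ | ⟨h, _⟩
    · rw [h]
    · rw [h, show π * -(t - (r:ℝ)) = -(π * (t-(r:ℝ))) by ring, Real.sin_neg, abs_neg]
  rw [h2]
  have h3 := jordan_ineq |t - (r:ℝ)| (abs_nonneg _) hu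
  have h4 : Real.sin (π * |t - (r:ℝ)|) ≤ |Real.sin (π * |t - (r:ℝ)|)| := le_abs_self _
  have hnf : nf t = |t - (r:ℝ)| := rfl
  rw [hnf]
  linarith

lemma norm_exp_sub_one (x : ℝ) : ‖Complex.exp ((x:ℂ) * Complex.I) - 1‖ = 2 * |Real.sin (x/2)| := by
  have h1 : Complex.exp ((x:ℂ) * Complex.I) - 1
      = ((Real.cos x - 1 : ℝ):ℂ) + ((Real.sin x : ℝ):ℂ) * Complex.I := by
    rw [Complex.exp_mul_I]
    push_cast
    ring
  rw [h1]
  have h2 := Complex.norm_add_mul_I (Real.cos x - 1) (Real.sin x)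
  rw [h2]
  have h3 : (Real.cos x - 1)^2 + (Real.sin x)^2 = (2*Real.sin (x/2))^2 := by
    have hc : Real.cos x = 2 * Real.cos (x/2)^2 - 1 := by
      have h := Real.cos_two_mul (x/2)
      rw [show 2*(x/2) = x by ring] at h
      linarith
    have hs : Real.sin (x/2)^2 + Real.cos (x/2)^2 = 1 := Real.sin_sq_add_cos_sq _
    have hsx : Real.sin x = 2 * Real.sin (x/2) * Real.cos (x/2) := by
      have h := Real.sin_two_mul (x/2)
      rw [show 2*(x/2) = x by ring] at h
      linarith
    rw [hc, hsx]
    linear_combination (4*Real.cos (x/2)^2 - 4) * hs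
  rw [h3, Real.sqrt_sq_eq_abs, abs_mul]
  norm_num

/-- The arc-avoidance lemma: there is an arc about `1` on the unit circle, of size
depending only on `n`, such that for any `λ₁, …, λₙ` on the unit circle, all
different from `1`, some common power of the `λⱼ`'s avoids the arc. -/
theorem arc_avoidance {n : ℕ} (hn : 1 ≤ n) :
    ∃ δ : ℝ, 0 < δ ∧ ∀ lam : Fin n → ℂ,
      (∀ j, ‖lam j‖ = 1 ∧ lam j ≠ 1) →
      ∃ k : ℕ, 0 < k ∧ ∀ j, δ ≤ ‖lam j ^ k - 1‖ := by
  obtain ⟨δ0, hδ0, hmain⟩ := main_real n hn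
  refine ⟨4*δ0, by linarith, ?_⟩
  intro lam hlam
  have hpi : (0:ℝ) < π := Real.pi_pos
  set θ : Fin n → ℝ := fun j => Complex.arg (lam j) with hθdef
  set α : Fin n → ℝ := fun j => θ j / (2*π) with hαdef
  have hexp : ∀ j, Complex.exp ((θ j : ℂ) * Complex.I) = lam j := by
    intro j
    have h1 := Complex.norm_mul_exp_arg_mul_I (lam j)
    have h2 : ‖lam j‖ = 1 := by
      exact (hlam j).1
    rw [h2] at h1
    simpa using h1
  have hθα : ∀ j, θ j = 2*π*(α j) := by
    intro j
    rw [hαdef]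
    field_simp
  have hnz : ∀ j, nf (α j) ≠ 0 := by
    intro j h0
    rw [nf_eq_zero_iff] at h0
    obtain ⟨z, hz⟩ := h0
    apply (hlam j).2
    rw [← hexp j]
    have : (θ j : ℂ) * Complex.I = (z:ℂ) * (2*(π:ℂ)*Complex.I) := by
      have : θ j = 2*π*(z:ℝ) := by rw [hθα j, hz]
      rw [this]
      push_cast
      ring
    rw [this, Complex.exp_int_mul_two_pi_mul_I]
  obtain ⟨k, hk, hkj⟩ := hmain α hnz
  refine ⟨k, hk, ?_⟩
  intro j
  have hpow : lam j ^ k = Complex.exp (Complex.ofReal ((k:ℝ) * θ j) * Complex.I) := by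
    rw [← hexp j]
    rw [← Complex.exp_nat_mul]
    congr 1
    push_cast
    ring
  rw [hpow, norm_exp_sub_one]
  have harg : (k:ℝ) * θ j / 2 = π * ((k:ℝ) * α j) := by
    rw [hθα j]
    ring
  rw [harg]
  have h1 := abs_sin_pi_ge ((k:ℝ) * α j)
  have h2 := hkj j
  linarith
end

section
/- Let D ⊂ ℂ^n be a bounded open set, p a point of its topological boundary, and ρ a real-valued C¹ function on an open neighborhood W of p with ρ(p) = 0 and dρ(p) ≠ 0. Let F be a C¹ map from W to ℂ^n with F(p) = p, whose real Fréchet derivative at p is complex linear, and suppose there is a continuous function h on a neighborhood of p with h(p) > 0 such that ρ ∘ F = h·ρ near p. Then h(p) is a positive real eigenvalue of the complex linear map dF(p) : ℂ^n → ℂ^n; in particular dF(p) has a positive real eigenvalue. -/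
open Set Metric Filter Topology

noncomputable section

/-- `ℂ^n` with the Euclidean norm. -/
abbrev CSpace (n : ℕ) := EuclideanSpace ℂ (Fin n)

/-- If `ρ` is a `C¹` local defining-type function at a boundary fixed point `p` of a `C¹`
map `F` whose real derivative at `p` is complex linear, and `ρ ∘ F = h · ρ` near `p` with
`h` continuous and `h p > 0`, then `h p` is a (positive real) eigenvalue of the complex
linear map `dF(p)`. -/
theorem boundary_positive_eigenvalue {n : ℕ} (D : Set (CSpace n))
    (hDopen : IsOpen D) (hDbdd : Bornology.IsBounded D)
    (p : CSpace n) (hp : p ∈ frontier D)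
    (W : Set (CSpace n)) (hW : IsOpen W) (hpW : p ∈ W)
    (ρ : CSpace n → ℝ) (hρ : ContDiffOn ℝ 1 ρ W)
    (hρp : ρ p = 0) (hdρ : fderiv ℝ ρ p ≠ 0)
    (F : CSpace n → CSpace n) (hF : ContDiffOn ℝ 1 F W) (hFp : F p = p)
    (hCL : ∀ v : CSpace n, fderiv ℝ F p (Complex.I • v) = Complex.I • fderiv ℝ F p v)
    (h : CSpace n → ℝ) (hpos : 0 < h p)
    (hfactor : ∃ V ∈ 𝓝 p, ContinuousOn h V ∧ ∀ z ∈ V, ρ (F z) = h z * ρ z) :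
    ∃ v : CSpace n, v ≠ 0 ∧ fderiv ℝ F p v = ((h p : ℂ)) • v := by
  classical
  obtain ⟨V, hV, hVcont, hVeq⟩ := hfactor
  set c : ℝ := h p with hc
  set L : CSpace n →L[ℝ] ℝ := fderiv ℝ ρ p with hLdef
  set A : CSpace n →L[ℝ] CSpace n := fderiv ℝ F p with hAdef
  -- differentiability
  have hWn : W ∈ 𝓝 p := hW.mem_nhds hpW
  have hLd : HasFDerivAt ρ L p :=
    ((hρ.differentiableOn one_ne_zero).differentiableAt hWn).hasFDerivAt
  have hAd : HasFDerivAt F A p :=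
    ((hF.differentiableOn one_ne_zero).differentiableAt hWn).hasFDerivAt
  -- derivative of the composition
  have hcomp : HasFDerivAt (fun z => ρ (F z)) (L.comp A) p := by
    have hLd' : HasFDerivAt ρ L (F p) := by rw [hFp]; exact hLd
    exact hLd'.comp p hAd
  -- derivative of z ↦ h z * ρ z at p is c • L
  have hct : Filter.Tendsto h (𝓝 p) (𝓝 c) := hVcont.continuousAt hV
  have hprod : HasFDerivAt (fun z => h z * ρ z) (c • L) p := by
    rw [hasFDerivAt_iff_isLittleO]
    have e1 : (fun z => ρ z - ρ p - L (z - p)) =o[𝓝 p] fun z => z - p :=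
      hLd.isLittleO
    have e2 : (fun z => h z - c) =o[𝓝 p] (fun _ => (1 : ℝ)) := by
      rw [Asymptotics.isLittleO_one_iff]
      simpa using hct.sub (tendsto_const_nhds (x := c))
    have e3 : (fun z => ρ z) =O[𝓝 p] fun z => ‖z - p‖ := by
      have := hLd.isBigO_sub
      simpa [hρp] using this.norm_right
    have e4 : (fun z => (h z - c) * ρ z) =o[𝓝 p] fun z => z - p := by
      have h5 := (e2.mul_isBigO e3).congr_right fun z => one_mul _
      exact h5.of_norm_right
    have e5 : (fun z => c * (ρ z - ρ p - L (z - p))) =o[𝓝 p] fun z => z - p :=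
      e1.const_mul_left c
    have := e4.add e5
    refine this.congr' (Filter.Eventually.of_forall fun z => ?_) (Filter.Eventually.of_forall fun z => rfl)
    simp [hρp]
    ring
  -- equality of derivatives
  have heqF : (fun z => ρ (F z)) =ᶠ[𝓝 p] fun z => h z * ρ z :=
    Filter.eventually_of_mem hV hVeq
  have hkey : L.comp A = c • L := hcomp.unique (hprod.congr_of_eventuallyEq heqF)
  have hkey' : ∀ v, L (A v) = c * L v := fun v => by
    have := congrArg (fun T : CSpace n →L[ℝ] ℝ => T v) hkey
    simpa using this
  -- the complex-linear functional Λ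
  have hsmul : ∀ (a : ℂ) (v : CSpace n),
      a • v = a.re • v + a.im • (Complex.I • v) := by
    intro a v
    have key : (a.re : ℂ) • v + ((a.im : ℂ) * Complex.I) • v = a • v := by
      rw [← add_smul, Complex.re_add_im]
    rw [← key, mul_smul, Complex.coe_smul, Complex.coe_smul]
  have hAsmul : ∀ (a : ℂ) (v : CSpace n), A (a • v) = a • A v := by
    intro a v
    rw [hsmul a v, map_add, map_smul, map_smul, hCL, hsmul a (A v)]
  let Ahat : Module.End ℂ (CSpace n) :=
    { toFun := A
      map_add' := fun x y => A.map_add x y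
      map_smul' := fun a v => hAsmul a v }
  let Λ : CSpace n →ₗ[ℂ] ℂ :=
    { toFun := fun v => (L v : ℂ) - Complex.I * (L (Complex.I • v) : ℂ)
      map_add' := fun x y => by
        simp [smul_add, map_add]
        ring
      map_smul' := fun a v => by
        have hIIv : Complex.I • (Complex.I • v) = -v := by
          rw [smul_smul, Complex.I_mul_I, neg_one_smul]
        have hIa : Complex.I • (a • v) = a • (Complex.I • v) := smul_comm _ _ _
        show (L (a • v) : ℂ) - Complex.I * (L (Complex.I • (a • v)) : ℂ)
            = a * ((L v : ℂ) - Complex.I * (L (Complex.I • v) : ℂ))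
        rw [hIa, hsmul a v, hsmul a (Complex.I • v)]
        simp only [hIIv, map_add, map_smul, map_neg]
        have ha : a = (a.re : ℂ) + a.im * Complex.I := (Complex.re_add_im a).symm
        push_cast [smul_eq_mul]
        conv_rhs => rw [ha]
        linear_combination (a.im : ℂ) * (L (Complex.I • v) : ℂ) * Complex.I_sq
      }
  have hΛne : Λ ≠ 0 := by
    intro h0
    apply hdρ
    ext v
    have := congrArg (fun T : CSpace n →ₗ[ℂ] ℂ => T v) h0
    simp only [Λ, LinearMap.coe_mk, AddHom.coe_mk, LinearMap.zero_apply] at this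
    have hre := congrArg Complex.re this
    simpa using hre
  -- Λ annihilates Ahat - c
  set T : Module.End ℂ (CSpace n) := Ahat - (c : ℂ) • 1 with hT
  have hΛT : ∀ v, Λ (T v) = 0 := by
    intro v
    have hAI : A (Complex.I • v) = Complex.I • A v := hCL v
    simp only [hT, LinearMap.sub_apply, LinearMap.smul_apply, Module.End.one_apply,
      map_sub, map_smul, smul_eq_mul]
    have hΛA : Λ (Ahat v) = (c : ℂ) * Λ v := by
      simp only [Λ, Ahat, LinearMap.coe_mk, AddHom.coe_mk]
      rw [← hAI, hkey', hkey']
      push_cast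
      ring
    rw [hΛA]
    ring
  -- T is not injective
  have hTnotinj : ¬ Function.Injective T := by
    intro hinj
    have hsurj : Function.Surjective T :=
      (LinearMap.injective_iff_surjective (f := T)).mp hinj
    apply hΛne
    ext v
    obtain ⟨w, hw⟩ := hsurj v
    simpa [hw] using hΛT w
  rw [Function.not_injective_iff] at hTnotinj
  obtain ⟨x, y, hxy, hne⟩ := hTnotinj
  refine ⟨x - y, sub_ne_zero_of_ne hne, ?_⟩
  have : T (x - y) = 0 := by rw [map_sub, hxy, sub_self]
  have h2 : Ahat (x - y) = (c : ℂ) • (x - y) := by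
    have := sub_eq_zero.mp (by simpa [hT, LinearMap.sub_apply] using this)
    simpa using this
  exact h2
end
end
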